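/- arXiv:1904.03686 — 2 statements merged into one kernel-verified Lean document; each statement's English description precedes it below -/
import Mathlib

section
/- For every r ≥ √2 and every t > 0: (2/(r²√(1-4/r⁶))) · e^{-tr⁴/2} sinh(t√(r⁸-4r²)/2) ≤ C e^{-t/r²}/r², where C > 0 is an absolute constant. -/
theorem high_freq_coeff_bound :
    ∃ C : ℝ, 0 < C ∧ ∀ r : ℝ, Real.sqrt 2 ≤ r → ∀ t : ℝ, 0 < t →
      2 / (r ^ 2 * Real.sqrt (1 - 4 / r ^ 6)) *
          (Real.exp (-t * r ^ 4 / 2) * Real.sinh (t * Real.sqrt (r ^ 8 - 4 * r ^ 2) / 2))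
        ≤ C * Real.exp (-t / r ^ 2) / r ^ 2 := by
  refine ⟨Real.sqrt 2, Real.sqrt_pos.mpr (by norm_num), ?_⟩
  intro r hr t ht
  have hs2 : Real.sqrt 2 ^ 2 = 2 := Real.sq_sqrt (by norm_num)
  have hs2pos : (0:ℝ) < Real.sqrt 2 := Real.sqrt_pos.mpr (by norm_num)
  have hr0 : 0 < r := lt_of_lt_of_le hs2pos hr
  have hr2 : 2 ≤ r ^ 2 := by nlinarith
  have hr4 : 4 ≤ r ^ 4 := by nlinarith
  have hr6 : 8 ≤ r ^ 6 := by nlinarith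
  have hr2pos : (0:ℝ) < r ^ 2 := by positivity
  have hr6pos : (0:ℝ) < r ^ 6 := by positivity
  -- 1 - 4/r^6 ≥ 1/2
  have h14 : (1:ℝ)/2 ≤ 1 - 4 / r ^ 6 := by
    have : 4 / r ^ 6 ≤ 1/2 := by
      rw [div_le_div_iff₀ hr6pos (by norm_num)]; linarith
    linarith
  have hsq : Real.sqrt (1/2) ≤ Real.sqrt (1 - 4 / r ^ 6) :=
    Real.sqrt_le_sqrt h14
  have hsqhalf : Real.sqrt (1/2) = 1 / Real.sqrt 2 := by
    rw [show (1:ℝ)/2 = 2⁻¹ by norm_num, Real.sqrt_inv, one_div]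
  have hden_pos : 0 < Real.sqrt (1 - 4 / r ^ 6) :=
    lt_of_lt_of_le (Real.sqrt_pos.mpr (by norm_num)) hsq
  -- bound sqrt(r^8 - 4r^2) ≤ r^4 - 2/r^2
  have hrhs_nonneg : (0:ℝ) ≤ r ^ 4 - 2 / r ^ 2 := by
    have : 2 / r ^ 2 ≤ 1 := by
      rw [div_le_one hr2pos]; linarith
    linarith
  have hsbound : Real.sqrt (r ^ 8 - 4 * r ^ 2) ≤ r ^ 4 - 2 / r ^ 2 := by
    rw [show r ^ 4 - 2 / r ^ 2 = Real.sqrt ((r ^ 4 - 2 / r ^ 2) ^ 2) from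
      (Real.sqrt_sq hrhs_nonneg).symm]
    apply Real.sqrt_le_sqrt
    have h : (r ^ 4 - 2 / r ^ 2) ^ 2 = r ^ 8 - 4 * r ^ 2 + 4 / r ^ 4 := by
      field_simp; ring
    have : (0:ℝ) < 4 / r ^ 4 := by positivity
    linarith
  set s := Real.sqrt (r ^ 8 - 4 * r ^ 2) with hs
  have hs_nonneg : 0 ≤ s := Real.sqrt_nonneg _
  -- exponent bound
  have hexp : -t * r ^ 4 / 2 + t * s / 2 ≤ -t / r ^ 2 := by
    have h1 : t * s ≤ t * (r ^ 4 - 2 / r ^ 2) :=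
      mul_le_mul_of_nonneg_left hsbound ht.le
    have h2 : -t / r ^ 2 = (t * (r ^ 4 - 2 / r ^ 2) - t * r ^ 4) / 2 := by
      field_simp; ring
    rw [h2]; linarith
  -- sinh bound: exp(-tr^4/2) * sinh(ts/2) ≤ exp(-t/r^2) / 2
  have hsinh : Real.exp (-t * r ^ 4 / 2) * Real.sinh (t * s / 2)
      ≤ Real.exp (-t / r ^ 2) / 2 := by
    have h1 : Real.sinh (t * s / 2) ≤ Real.exp (t * s / 2) / 2 := by
      rw [Real.sinh_eq]
      have := Real.exp_pos (-(t * s / 2))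
      linarith
    have h2 : Real.exp (-t * r ^ 4 / 2) * (Real.exp (t * s / 2) / 2)
        = Real.exp (-t * r ^ 4 / 2 + t * s / 2) / 2 := by
      rw [Real.exp_add]; ring
    calc Real.exp (-t * r ^ 4 / 2) * Real.sinh (t * s / 2)
        ≤ Real.exp (-t * r ^ 4 / 2) * (Real.exp (t * s / 2) / 2) := by
          exact mul_le_mul_of_nonneg_left h1 (Real.exp_pos _).le
      _ = Real.exp (-t * r ^ 4 / 2 + t * s / 2) / 2 := h2
      _ ≤ Real.exp (-t / r ^ 2) / 2 := by
          have := Real.exp_le_exp.mpr hexp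
          linarith
  -- coefficient bound: 2/(r^2 * sqrt(...)) ≤ 2 * sqrt 2 / r^2
  have hcoef : 2 / (r ^ 2 * Real.sqrt (1 - 4 / r ^ 6)) ≤ 2 * Real.sqrt 2 / r ^ 2 := by
    rw [div_le_div_iff₀ (by positivity) hr2pos]
    have h1 : 1 ≤ Real.sqrt 2 * Real.sqrt (1 - 4 / r ^ 6) := by
      have := mul_le_mul_of_nonneg_left hsq hs2pos.le
      rw [hsqhalf] at this
      have h2 : Real.sqrt 2 * (1 / Real.sqrt 2) = 1 := by
        field_simp
      linarith
    nlinarith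
  have hmid_nonneg : 0 ≤ Real.exp (-t * r ^ 4 / 2) * Real.sinh (t * s / 2) := by
    have : 0 ≤ Real.sinh (t * s / 2) :=
      Real.sinh_nonneg_iff.mpr (by positivity)
    positivity
  calc 2 / (r ^ 2 * Real.sqrt (1 - 4 / r ^ 6)) *
          (Real.exp (-t * r ^ 4 / 2) * Real.sinh (t * s / 2))
      ≤ 2 * Real.sqrt 2 / r ^ 2 * (Real.exp (-t / r ^ 2) / 2) := by
        apply mul_le_mul hcoef hsinh hmid_nonneg (by positivity)
    _ = Real.sqrt 2 * Real.exp (-t / r ^ 2) / r ^ 2 := by ring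
end

section
/- Let n ≥ 1 and ℓ ≥ 0, and suppose a, b are measurable functions on ℝⁿ with |ξ|^{ℓ+1} a ∈ L² and |ξ|^ℓ b ∈ L². Then there exists C > 0 such that for all t > 0, ∫_{|ξ|≥√2} ( e^{-t/|ξ|²}/|ξ|² · |a(ξ)| + e^{-t/|ξ|²} |b(ξ)| )² dξ ≤ C(1+t)^{-(ℓ+3)} ‖|ξ|^{ℓ+1}a‖² + C(1+t)^{-ℓ} ‖|ξ|^ℓ b‖². -/
/-!
Write `s = ‖ξ‖² ≥ 1` and `e = exp (-t / s) ≤ 1`. Since `(1 + t) / s ≤ 1 + t / s` and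
`y ^ p e^{-y}` is bounded on `[0, ∞)`, we get `e · s^{-p} ≤ C_p (1 + t)^{-p}` for every `p ≥ 0`.
Then `(e a / s + e b)² ≤ 2 e |a|² / s² + 2 e |b|²` (using `e² ≤ e`), and the two terms are
`e s^{-(ℓ+3)} · ‖ξ‖^{2(ℓ+1)} |a|²` and `e s^{-ℓ} · ‖ξ‖^{2ℓ} |b|²`; integrating gives the estimate.
-/

open MeasureTheory Real

theorem rpow_mul_exp_neg_le {p y : ℝ} (hp : 0 ≤ p) (hy : 0 ≤ y) :
    y ^ p * exp (-y) ≤ p ^ p * exp (-p) := by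
  rcases hp.eq_or_lt with rfl | hp
  · simpa using exp_le_one_iff.mpr (neg_nonpos.mpr hy)
  have hyp : y / p ≤ exp (y / p - 1) := by linarith [add_one_le_exp (y / p - 1)]
  have hpow : y ^ p = p ^ p * (y / p) ^ p := by
    rw [← mul_rpow hp.le (by positivity), mul_div_cancel₀ y hp.ne']
  calc y ^ p * exp (-y)
      ≤ p ^ p * exp (y / p - 1) ^ p * exp (-y) := by
        rw [hpow]; gcongr
    _ = p ^ p * exp (-p) := by
        rw [← exp_mul, mul_assoc, ← exp_add, sub_mul, div_mul_cancel₀ y hp.ne']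
        ring_nf

-- `e · sup_{y ≥ 0} y ^ p e^{-y}`, the supremum being attained at `y = p`.
noncomputable def decayConst (p : ℝ) : ℝ := p ^ p * exp (1 - p)

theorem decayConst_pos {p : ℝ} (hp : 0 ≤ p) : 0 < decayConst p := by
  rcases hp.eq_or_lt with rfl | hp
  · simp [decayConst, exp_pos]
  · unfold decayConst; positivity

theorem exp_neg_div_mul_rpow_neg_le {p t s : ℝ} (hp : 0 ≤ p) (ht : 0 ≤ t) (hs : 1 ≤ s) :
    exp (-t / s) * s ^ (-p) ≤ decayConst p * (1 + t) ^ (-p) := by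
  have hs0 : 0 < s := one_pos.trans_le hs
  have h1t : 0 < 1 + t := by linarith
  have hratio : (1 + t) / s ≤ 1 + t / s := by
    rw [add_div]; gcongr; exact div_le_one_of_le₀ hs hs0.le
  have key : ((1 + t) / s) ^ p * exp (-t / s) ≤ decayConst p := by
    calc ((1 + t) / s) ^ p * exp (-t / s)
        ≤ (1 + t / s) ^ p * exp (-(1 + t / s)) * exp 1 := by
          rw [mul_assoc, ← exp_add]; gcongr; exact le_of_eq (by ring)
      _ ≤ p ^ p * exp (-p) * exp 1 := by
          gcongr ?_ * _; exact rpow_mul_exp_neg_le hp (by positivity)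
      _ = decayConst p := by rw [decayConst, mul_assoc, ← exp_add]; ring_nf
  rw [div_rpow h1t.le hs0.le] at key
  rw [rpow_neg hs0.le, rpow_neg h1t.le]
  have h1tp : 0 < (1 + t) ^ p := rpow_pos_of_pos h1t p
  have hsp : 0 < s ^ p := rpow_pos_of_pos hs0 p
  calc exp (-t / s) * (s ^ p)⁻¹
        = (1 + t) ^ p / s ^ p * exp (-t / s) * ((1 + t) ^ p)⁻¹ := by field_simp
    _ ≤ decayConst p * ((1 + t) ^ p)⁻¹ := by gcongr

theorem high_freq_integrand_le {l t r A B : ℝ} (hl : 0 ≤ l) (ht : 0 ≤ t) (hr : 1 ≤ r) :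
    (exp (-t / r ^ 2) / r ^ 2 * A + exp (-t / r ^ 2) * B) ^ 2
      ≤ 2 * (decayConst (l + 3) + decayConst l) * (1 + t) ^ (-(l + 3)) *
          (r ^ (2 * (l + 1)) * A ^ 2) +
        2 * (decayConst (l + 3) + decayConst l) * (1 + t) ^ (-l) * (r ^ (2 * l) * B ^ 2) := by
  set s := r ^ 2 with hs_def
  set e := exp (-t / s)
  have hs : 1 ≤ s := one_le_pow₀ hr
  have hs0 : 0 < s := one_pos.trans_le hs
  have he0 : 0 ≤ e := (exp_pos _).le
  have he1 : e ≤ 1 := exp_le_one_iff.mpr (div_nonpos_of_nonpos_of_nonneg (by linarith) hs0.le)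
  have hr_pow (q : ℝ) : r ^ (2 * q) = s ^ q := by
    rw [hs_def, ← rpow_natCast_mul (by linarith)]; norm_num
  have hD₁ := (decayConst_pos (by linarith : 0 ≤ l + 3)).le
  have hD₂ := (decayConst_pos hl).le
  have ha : e * (A / s) ^ 2 ≤
      decayConst (l + 3) * (1 + t) ^ (-(l + 3)) * (r ^ (2 * (l + 1)) * A ^ 2) := by
    calc e * (A / s) ^ 2 = e * s ^ (-(l + 3)) * (s ^ (l + 1) * A ^ 2) := by
          have hpow : s ^ (-(l + 3)) * s ^ (l + 1) = (s ^ 2)⁻¹ := by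
            rw [← rpow_add hs0, show -(l + 3) + (l + 1) = -((2 : ℕ) : ℝ) by push_cast; ring,
              rpow_neg hs0.le, rpow_natCast]
          rw [show e * s ^ (-(l + 3)) * (s ^ (l + 1) * A ^ 2)
              = e * (s ^ (-(l + 3)) * s ^ (l + 1)) * A ^ 2 by ring, hpow]
          ring
      _ ≤ _ := by
          rw [hr_pow]
          exact mul_le_mul_of_nonneg_right
            (exp_neg_div_mul_rpow_neg_le (by linarith) ht hs) (by positivity)
  have hb : e * B ^ 2 ≤ decayConst l * (1 + t) ^ (-l) * (r ^ (2 * l) * B ^ 2) := by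
    calc e * B ^ 2 = e * s ^ (-l) * (s ^ l * B ^ 2) := by
          rw [mul_assoc, ← mul_assoc (s ^ _), ← rpow_add hs0]; simp
      _ ≤ _ := by
          rw [hr_pow]
          exact mul_le_mul_of_nonneg_right
            (exp_neg_div_mul_rpow_neg_le hl ht hs) (by positivity)
  have hX : (e / s * A) ^ 2 ≤ e * (A / s) ^ 2 := by
    rw [div_mul_eq_mul_div, mul_div_assoc, mul_pow]
    exact mul_le_mul_of_nonneg_right (pow_le_of_le_one he0 he1 two_ne_zero) (sq_nonneg _)
  have hY : (e * B) ^ 2 ≤ e * B ^ 2 := by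
    rw [mul_pow]
    exact mul_le_mul_of_nonneg_right (pow_le_of_le_one he0 he1 two_ne_zero) (sq_nonneg _)
  have hP₁ : 0 ≤ (1 + t) ^ (-(l + 3)) * (r ^ (2 * (l + 1)) * A ^ 2) := by positivity
  have hP₂ : 0 ≤ (1 + t) ^ (-l) * (r ^ (2 * l) * B ^ 2) := by positivity
  calc (e / s * A + e * B) ^ 2 ≤ 2 * ((e / s * A) ^ 2 + (e * B) ^ 2) := add_sq_le
    _ ≤ 2 * (decayConst (l + 3) * (1 + t) ^ (-(l + 3)) * (r ^ (2 * (l + 1)) * A ^ 2) +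
          decayConst l * (1 + t) ^ (-l) * (r ^ (2 * l) * B ^ 2)) := by gcongr <;> linarith
    _ ≤ _ := by nlinarith [mul_nonneg hD₁ hP₂, mul_nonneg hD₂ hP₁]

theorem MeasureTheory.MemLp.integrable_rpow_norm_mul_norm_sq {α E : Type*}
    [SeminormedAddGroup α] [MeasurableSpace α] {μ : Measure α} [NormedAddCommGroup E]
    [NormedSpace ℝ E] {f : α → E} {q : ℝ}
    (hf : MemLp (fun x => (‖x‖ ^ q : ℝ) • f x) 2 μ) :
    Integrable (fun x => ‖x‖ ^ (2 * q) * ‖f x‖ ^ 2) μ := by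
  refine (hf.integrable_norm_pow two_ne_zero).congr (ae_of_all _ fun x => ?_)
  dsimp only
  rw [norm_smul, mul_pow, Real.norm_of_nonneg (rpow_nonneg (norm_nonneg x) q),
    ← rpow_mul_natCast (norm_nonneg x), mul_comm 2 q, Nat.cast_ofNat]

theorem setIntegral_le_integral_of_le_on {α : Type*} [MeasurableSpace α] {μ : Measure α}
    {s : Set α} {f g : α → ℝ} (hs : MeasurableSet s) (hf : 0 ≤ f) (hg : Integrable g μ)
    (hg0 : 0 ≤ g) (hfg : ∀ x ∈ s, f x ≤ g x) : ∫ x in s, f x ∂μ ≤ ∫ x, g x ∂μ :=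
  (integral_mono_of_nonneg (ae_of_all _ hf) hg.restrict ((ae_restrict_iff' hs).mpr
    (ae_of_all _ hfg))).trans (setIntegral_le_integral hg (ae_of_all _ hg0))

theorem high_freq_sobolev_estimate_general (n : ℕ) (l : ℝ) (hl : 0 ≤ l) :
    ∃ C : ℝ, 0 < C ∧ ∀ a b : EuclideanSpace ℝ (Fin n) → ℂ,
      Measurable a → Measurable b →
      MemLp (fun ξ => (‖ξ‖ ^ (l + 1) : ℝ) • a ξ) 2 volume →
      MemLp (fun ξ => (‖ξ‖ ^ l : ℝ) • b ξ) 2 volume →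
      ∀ t : ℝ, 0 < t →
        ∫ ξ in {ξ : EuclideanSpace ℝ (Fin n) | Real.sqrt 2 ≤ ‖ξ‖},
            (Real.exp (-t / ‖ξ‖ ^ 2) / ‖ξ‖ ^ 2 * ‖a ξ‖ +
              Real.exp (-t / ‖ξ‖ ^ 2) * ‖b ξ‖) ^ 2
          ≤ C * (1 + t) ^ (-(l + 3)) *
              (∫ ξ : EuclideanSpace ℝ (Fin n), ‖ξ‖ ^ (2 * (l + 1)) * ‖a ξ‖ ^ 2) +
            C * (1 + t) ^ (-l) *
              (∫ ξ : EuclideanSpace ℝ (Fin n), ‖ξ‖ ^ (2 * l) * ‖b ξ‖ ^ 2) := by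
  have hC : 0 < 2 * (decayConst (l + 3) + decayConst l) := by
    linarith [decayConst_pos (by linarith : 0 ≤ l + 3), decayConst_pos hl]
  refine ⟨_, hC, fun a b _ _ ha hb t ht => ?_⟩
  have ha' := ha.integrable_rpow_norm_mul_norm_sq.const_mul
    (2 * (decayConst (l + 3) + decayConst l) * (1 + t) ^ (-(l + 3)))
  have hb' := hb.integrable_rpow_norm_mul_norm_sq.const_mul
    (2 * (decayConst (l + 3) + decayConst l) * (1 + t) ^ (-l))
  rw [← integral_const_mul, ← integral_const_mul, ← integral_add ha' hb']
  refine setIntegral_le_integral_of_le_on (measurableSet_le measurable_const measurable_norm)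
    (fun ξ => sq_nonneg _) (ha'.add hb') (fun ξ => by positivity) fun ξ hξ => ?_
  exact high_freq_integrand_le hl ht.le ((Real.one_le_sqrt.mpr one_le_two).trans hξ)

theorem high_freq_sobolev_estimate (n : ℕ) (hn : 1 ≤ n) (l : ℝ) (hl : 0 ≤ l) :
    ∃ C : ℝ, 0 < C ∧ ∀ a b : EuclideanSpace ℝ (Fin n) → ℂ,
      Measurable a → Measurable b →
      MemLp (fun ξ => (‖ξ‖ ^ (l + 1) : ℝ) • a ξ) 2 volume →
      MemLp (fun ξ => (‖ξ‖ ^ l : ℝ) • b ξ) 2 volume →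
      ∀ t : ℝ, 0 < t →
        ∫ ξ in {ξ : EuclideanSpace ℝ (Fin n) | Real.sqrt 2 ≤ ‖ξ‖},
            (Real.exp (-t / ‖ξ‖ ^ 2) / ‖ξ‖ ^ 2 * ‖a ξ‖ +
              Real.exp (-t / ‖ξ‖ ^ 2) * ‖b ξ‖) ^ 2
          ≤ C * (1 + t) ^ (-(l + 3)) *
              (∫ ξ : EuclideanSpace ℝ (Fin n), ‖ξ‖ ^ (2 * (l + 1)) * ‖a ξ‖ ^ 2) +
            C * (1 + t) ^ (-l) *
              (∫ ξ : EuclideanSpace ℝ (Fin n), ‖ξ‖ ^ (2 * l) * ‖b ξ‖ ^ 2) :=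
  high_freq_sobolev_estimate_general n l hl
end
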